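/- arXiv:1810.03204 — 3 statements merged into one kernel-verified Lean document; each statement's English description precedes it below -/
import Mathlib

section
/- Let n ≥ 3, let V be an n-dimensional real vector space with a nondegenerate symmetric bilinear form g of Lorentzian signature (−,+,…,+), and let u ∈ V satisfy g(u,u) = −1. If v ∈ V and there exist real numbers a, b such that g(v,x)g(v,y) = a·g(x,y) + b·g(u,x)g(u,y) for all x, y ∈ V, then v = λu for some λ ∈ ℝ (and consequently a = 0 and b = λ²). -/
/-!
If `a ≠ 0`, the identity exhibits `a • g` as a form of rank at most two; since `g` is nondegenerate
on a space of dimension at least three this is impossible, so `a = 0`. The identity then reads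
`g(v,·) ⊗ g(v,·) = b g(u,·) ⊗ g(u,·)`, and evaluating it at `u` forces `g(v,·) = -g(v,u) g(u,·)`.
-/

noncomputable section
open scoped BigOperators

namespace GRWAlg

variable {V : Type*} [AddCommGroup V] [Module ℝ V] {n : ℕ}

/-- `e` is a (pseudo-)orthonormal basis realizing the Lorentzian signature (−,+,…,+). -/
def IsLorentzBasis (g : V →ₗ[ℝ] V →ₗ[ℝ] ℝ) (e : Module.Basis (Fin n) ℝ V) : Prop :=
  ∀ i j, g (e i) (e j) = if i = j then (if (i : ℕ) = 0 then (-1 : ℝ) else 1) else 0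

section

variable {K W : Type*} [Field K] [AddCommGroup W] [Module K W]

theorem exists_ne_zero_apply_eq_zero_of_two_lt_finrank [FiniteDimensional K W]
    (hW : 2 < Module.finrank K W) (f₁ f₂ : W →ₗ[K] K) :
    ∃ x ≠ 0, f₁ x = 0 ∧ f₂ x = 0 := by
  have hker : LinearMap.ker (f₁.prod f₂) ≠ ⊥ :=
    LinearMap.ker_ne_bot_of_finrank_lt (by simpa using hW)
  obtain ⟨x, hx, hx0⟩ := Submodule.exists_mem_ne_zero_of_ne_bot hker
  simp only [LinearMap.mem_ker, LinearMap.prod_apply, Function.prod_apply, Prod.mk_eq_zero] at hx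
  exact ⟨x, hx0, hx⟩

theorem eq_zero_of_forall_mul_apply_eq_rank_two [FiniteDimensional K W]
    (hW : 2 < Module.finrank K W) {g : W →ₗ[K] W →ₗ[K] K} (hg : g.SeparatingLeft)
    (f₁ f₂ : W →ₗ[K] K) (h₁ h₂ : W → K) {a : K}
    (h : ∀ x y, a * g x y = f₁ x * h₁ y + f₂ x * h₂ y) : a = 0 := by
  by_contra ha
  obtain ⟨x, hx0, hx₁, hx₂⟩ := exists_ne_zero_apply_eq_zero_of_two_lt_finrank hW f₁ f₂
  refine hx0 (hg x fun y => ?_)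
  simpa [hx₁, hx₂, ha] using h x y

theorem eq_neg_smul_of_forall_mul_eq {g : W →ₗ[K] W →ₗ[K] K} (hg : g.SeparatingLeft)
    {u v : W} (hu : g u u = -1) {b : K} (hv : ∀ x y, g v x * g v y = b * g u x * g u y) :
    v = -(g v u) • u := by
  rw [← sub_eq_zero, neg_smul, sub_neg_eq_add]
  refine hg _ fun y => ?_
  have hvu : g v u * g v y = -b * g u y := by simpa [hu] using hv u y
  have hsq : (g v y + g v u * g u y) ^ 2 = 0 := by
    have hb : g v u ^ 2 = b := by simpa [hu, sq] using hv u u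
    linear_combination hv y y + 2 * g u y * hvu + g u y ^ 2 * hb
  simpa using hsq

end

theorem stmt0_general (hn : 3 ≤ n) [FiniteDimensional ℝ V] (hdim : Module.finrank ℝ V = n)
    (g : V →ₗ[ℝ] V →ₗ[ℝ] ℝ)
    (hg_nondeg : ∀ x : V, (∀ y : V, g x y = 0) → x = 0)
    (u : V) (hu : g u u = -1)
    (v : V) (a b : ℝ)
    (hv : ∀ x y : V, g v x * g v y = a * g x y + b * g u x * g u y) :
    ∃ l : ℝ, v = l • u ∧ a = 0 ∧ b = l ^ 2 := by
  have ha : a = 0 :=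
    eq_zero_of_forall_mul_apply_eq_rank_two (by omega) hg_nondeg (g v) (g u) (g v)
      (fun y => -b * g u y) fun x y => by linear_combination -hv x y
  subst ha
  have hv' : ∀ x y, g v x * g v y = b * g u x * g u y := fun x y => by simpa using hv x y
  refine ⟨-(g v u), eq_neg_smul_of_forall_mul_eq hg_nondeg hu hv', rfl, ?_⟩
  simpa [hu, sq] using (hv' u u).symm

/-- Algebraic step for condition C1: if `g(v,x)g(v,y) = a g(x,y) + b u_x u_y`
for all `x, y`, then `v` is parallel to the unit timelike vector `u`,
and consequently `a = 0`, `b = λ²`. -/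
theorem stmt0 (hn : 3 ≤ n) [FiniteDimensional ℝ V] (hdim : Module.finrank ℝ V = n)
    (g : V →ₗ[ℝ] V →ₗ[ℝ] ℝ)
    (hg_symm : ∀ x y : V, g x y = g y x)
    (hg_nondeg : ∀ x : V, (∀ y : V, g x y = 0) → x = 0)
    (e : Module.Basis (Fin n) ℝ V) (he : IsLorentzBasis g e)
    (u : V) (hu : g u u = -1)
    (v : V) (a b : ℝ)
    (hv : ∀ x y : V, g v x * g v y = a * g x y + b * g u x * g u y) :
    ∃ l : ℝ, v = l • u ∧ a = 0 ∧ b = l ^ 2 :=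
  stmt0_general hn hdim g hg_nondeg u hu v a b hv
end GRWAlg
end
end

section
/- Let V be a real vector space of finite dimension n ≥ 3 with a nondegenerate symmetric bilinear form g of Lorentzian signature (−,+,…,+), and let u ∈ V satisfy g(u,u) = −1. Let C : V×V×V×V → ℝ be multilinear and antisymmetric in its first two arguments, C(x,y,z,w) = −C(y,x,z,w). Assume u is Weyl-compatible with C, i.e. g(u,x)C(y,z,w,u) + g(u,y)C(z,x,w,u) + g(u,z)C(x,y,w,u) = 0 for all x, y, z, w ∈ V. Then C(u,y,z,u) = 0 for all y, z ∈ V if and only if C(x,y,z,u) = 0 for all x, y, z ∈ V. -/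
noncomputable section
open scoped BigOperators

namespace GRWAlg

variable {V : Type*} [AddCommGroup V] [Module ℝ V] {n : ℕ}

lemma eq_sub_of_compatible {W R : Type*} [CommRing R] (g : W → W → R)
    (C : W → W → W → W → R) (u : W) (hu : g u u = -1)
    (hanti : ∀ x y z w : W, C x y z w = - C y x z w)
    (hcomp : ∀ x y z w : W,
        g u x * C y z w u + g u y * C z x w u + g u z * C x y w u = 0) (x y z : W) :
    C x y z u = g u y * C u x z u - g u x * C u y z u := by
  have h := hcomp u x y z
  rw [hu, hanti y u] at h
  linear_combination -h

theorem stmt1_general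
    (g : V →ₗ[ℝ] V →ₗ[ℝ] ℝ)
    (u : V) (hu : g u u = -1)
    (C : V →ₗ[ℝ] V →ₗ[ℝ] V →ₗ[ℝ] V →ₗ[ℝ] ℝ)
    (hanti : ∀ x y z w : V, C x y z w = - C y x z w)
    (hcomp : ∀ x y z w : V,
        g u x * C y z w u + g u y * C z x w u + g u z * C x y w u = 0) :
    (∀ y z : V, C u y z u = 0) ↔ (∀ x y z : V, C x y z u = 0) := by
  refine ⟨fun h x y z => ?_, fun h y z => h u y z⟩
  rw [eq_sub_of_compatible (fun x y => g x y) (fun x y z w => C x y z w) u hu hanti hcomp,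
    h x z, h y z]
  ring

/-- Weyl-compatibility implies: `C(u,y,z,u) = 0` for all `y,z` iff
`C(x,y,z,u) = 0` for all `x,y,z`. -/
theorem stmt1 (hn : 3 ≤ n) [FiniteDimensional ℝ V] (hdim : Module.finrank ℝ V = n)
    (g : V →ₗ[ℝ] V →ₗ[ℝ] ℝ)
    (hg_symm : ∀ x y : V, g x y = g y x)
    (hg_nondeg : ∀ x : V, (∀ y : V, g x y = 0) → x = 0)
    (e : Module.Basis (Fin n) ℝ V) (he : IsLorentzBasis g e)
    (u : V) (hu : g u u = -1)
    (C : V →ₗ[ℝ] V →ₗ[ℝ] V →ₗ[ℝ] V →ₗ[ℝ] ℝ)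
    (hanti : ∀ x y z w : V, C x y z w = - C y x z w)
    (hcomp : ∀ x y z w : V,
        g u x * C y z w u + g u y * C z x w u + g u z * C x y w u = 0) :
    (∀ y z : V, C u y z u = 0) ↔ (∀ x y z : V, C x y z u = 0) :=
  stmt1_general g u hu C hanti hcomp
end GRWAlg
end
end

section
/- Let V be a real vector space of finite dimension n ≥ 3 with a nondegenerate symmetric bilinear form g of Lorentzian signature (−,+,…,+), and let u ∈ V satisfy g(u,u) = −1. Let K : V×V×V×V → ℝ be multilinear with the Riemann symmetries K(x,y,z,w) = −K(y,x,z,w) = −K(x,y,w,z) = K(z,w,x,y). Define Ric(y,z) = Σ_{j,m} g^{jm} K(e_j, y, z, e_m), scal = Σ_{k,l} g^{kl} Ric(e_k,e_l), and the Weyl-type tensor C(x,y,z,w) = K(x,y,z,w) + [g(x,w)Ric(y,z) − g(y,w)Ric(x,z) + Ric(x,w)g(y,z) − Ric(y,w)g(x,z)]/(n−2) − scal·[g(x,w)g(y,z) − g(y,w)g(x,z)]/((n−1)(n−2)). If u is Riemann-compatible, i.e. g(u,x)K(y,z,w,u) + g(u,y)K(z,x,w,u) + g(u,z)K(x,y,w,u)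 = 0 for all x, y, z, w ∈ V, then u is an eigenvector of Ric (there is ξ ∈ ℝ with Ric(u,y) = ξ·g(u,y) for all y) and u is Weyl-compatible: g(u,x)C(y,z,w,u) + g(u,y)C(z,x,w,u) + g(u,z)C(x,y,w,u) = 0 for all x, y, z, w ∈ V. -/
noncomputable section
open scoped BigOperators

namespace GRWAlg

variable {V : Type*} [AddCommGroup V] [Module ℝ V] {n : ℕ}

/-- Inverse Gram matrix `(g^{jm})` of `g` in the basis `e`. -/
def gramInv (g : V →ₗ[ℝ] V →ₗ[ℝ] ℝ) (e : Module.Basis (Fin n) ℝ V) :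
    Matrix (Fin n) (Fin n) ℝ :=
  (Matrix.of fun i j => g (e i) (e j))⁻¹

/-- Ricci contraction `Ric(y,z) = g^{jm} K(e_j, y, z, e_m)`. -/
def ricOf (g : V →ₗ[ℝ] V →ₗ[ℝ] ℝ) (e : Module.Basis (Fin n) ℝ V)
    (K : V →ₗ[ℝ] V →ₗ[ℝ] V →ₗ[ℝ] V →ₗ[ℝ] ℝ) (y z : V) : ℝ :=
  ∑ j, ∑ m, gramInv g e j m * K (e j) y z (e m)

/-- Scalar contraction `scal = g^{kl} Ric(e_k, e_l)`. -/
def scalOf (g : V →ₗ[ℝ] V →ₗ[ℝ] ℝ) (e : Module.Basis (Fin n) ℝ V)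
    (K : V →ₗ[ℝ] V →ₗ[ℝ] V →ₗ[ℝ] V →ₗ[ℝ] ℝ) : ℝ :=
  ∑ k, ∑ l, gramInv g e k l * ricOf g e K (e k) (e l)

/-- Weyl-type tensor of `K` (trace-free part of the curvature decomposition). -/
def weylOf (g : V →ₗ[ℝ] V →ₗ[ℝ] ℝ) (e : Module.Basis (Fin n) ℝ V)
    (K : V →ₗ[ℝ] V →ₗ[ℝ] V →ₗ[ℝ] V →ₗ[ℝ] ℝ) (x y z w : V) : ℝ :=
  K x y z w
    + (g x w * ricOf g e K y z - g y w * ricOf g e K x z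
        + ricOf g e K x w * g y z - ricOf g e K y w * g x z) / ((n : ℝ) - 2)
    - scalOf g e K * (g x w * g y z - g y w * g x z) / (((n : ℝ) - 1) * ((n : ℝ) - 2))

/-!
In a Lorentz basis the inverse Gram matrix is `diag(-1, 1, …, 1)`, so `Ric(y,z)` is the signed
trace `∑ⱼ ±K(eⱼ, y, z, eⱼ)`. Contracting the Riemann-compatibility identity over `x = w = eⱼ`
turns its first term into `K(y,z,u,u) = 0` and gives `g(u,y) Ric(u,z) = g(u,z) Ric(u,y)`, and `z = u` makes `u` a Ricci eigenvector. Once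
`Ric(·,u) = ξ g(u,·)`, every Ricci and scalar term of `C(·,·,·,u)` is a product of two factors
`g(u,·)` and cancels in the cyclic sum, so Weyl-compatibility reduces to Riemann-compatibility.
-/

section LorentzBasis

variable {g : V →ₗ[ℝ] V →ₗ[ℝ] ℝ} {e : Module.Basis (Fin n) ℝ V}

def lorentzSign (i : Fin n) : ℝ := if (i : ℕ) = 0 then -1 else 1

lemma lorentzSign_mul_self (i : Fin n) : lorentzSign i * lorentzSign i = 1 := by
  unfold lorentzSign; split_ifs <;> norm_num

lemma IsLorentzBasis.gram_eq_diagonal (he : IsLorentzBasis g e) :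
    (Matrix.of fun i j => g (e i) (e j)) = Matrix.diagonal lorentzSign := by
  ext i j
  rw [Matrix.of_apply, he i j, Matrix.diagonal_apply, lorentzSign]

lemma IsLorentzBasis.gramInv_eq_diagonal (he : IsLorentzBasis g e) :
    gramInv g e = Matrix.diagonal lorentzSign := by
  rw [gramInv, he.gram_eq_diagonal]
  refine Matrix.inv_eq_right_inv ?_
  rw [Matrix.diagonal_mul_diagonal, ← Matrix.diagonal_one]
  exact congrArg Matrix.diagonal (funext lorentzSign_mul_self)

lemma IsLorentzBasis.apply_basis (he : IsLorentzBasis g e) (u : V) (j : Fin n) :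
    g u (e j) = lorentzSign j * e.repr u j := by
  conv_lhs => rw [← e.sum_repr u]
  simp only [map_sum, map_smul, LinearMap.sum_apply, LinearMap.smul_apply, smul_eq_mul, he _ j,
    mul_ite, mul_zero, Finset.sum_ite_eq', Finset.mem_univ, if_true, lorentzSign]
  split_ifs <;> ring

lemma IsLorentzBasis.sum_lorentzSign_mul_apply_basis (he : IsLorentzBasis g e) (u : V)
    (f : V →ₗ[ℝ] ℝ) : ∑ j, lorentzSign j * (g u (e j) * f (e j)) = f u := by
  conv_rhs => rw [← e.sum_repr u]
  simp only [map_sum, map_smul, smul_eq_mul, he.apply_basis]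
  refine Finset.sum_congr rfl fun j _ => ?_
  linear_combination (e.repr u j * f (e j)) * lorentzSign_mul_self j

variable {K : V →ₗ[ℝ] V →ₗ[ℝ] V →ₗ[ℝ] V →ₗ[ℝ] ℝ}

lemma IsLorentzBasis.ricOf_eq_sum (he : IsLorentzBasis g e) (y z : V) :
    ricOf g e K y z = ∑ j, lorentzSign j * K (e j) y z (e j) := by
  simp only [ricOf, he.gramInv_eq_diagonal, Matrix.diagonal_apply, ite_mul, zero_mul,
    Finset.sum_ite_eq, Finset.mem_univ, if_true]

lemma IsLorentzBasis.ricOf_comm (he : IsLorentzBasis g e)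
    (hK1 : ∀ x y z w : V, K x y z w = - K y x z w)
    (hK2 : ∀ x y z w : V, K x y z w = - K x y w z)
    (hK3 : ∀ x y z w : V, K x y z w = K z w x y) (y z : V) :
    ricOf g e K y z = ricOf g e K z y := by
  simp only [he.ricOf_eq_sum]
  refine Finset.sum_congr rfl fun j _ => ?_
  rw [hK3 (e j) y z (e j), hK1 z (e j) (e j) y, hK2 (e j) z (e j) y, neg_neg]

lemma IsLorentzBasis.mul_ricOf_comm_of_compatible (he : IsLorentzBasis g e)
    (hK1 : ∀ x y z w : V, K x y z w = - K y x z w)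
    (hK2 : ∀ x y z w : V, K x y z w = - K x y w z)
    (hK3 : ∀ x y z w : V, K x y z w = K z w x y) {u : V}
    (hRcomp : ∀ x y z w : V,
        g u x * K y z w u + g u y * K z x w u + g u z * K x y w u = 0) (y z : V) :
    g u y * ricOf g e K u z = g u z * ricOf g e K u y := by
  have hcontract : ∑ j, lorentzSign j * (g u (e j) * K y z (e j) u
      + g u y * K z (e j) (e j) u + g u z * K (e j) y (e j) u) = 0 := by
    simp [hRcomp]
  have hfirst : ∑ j, lorentzSign j * (g u (e j) * K y z (e j) u) = 0 := by
    have htrace := he.sum_lorentzSign_mul_apply_basis u ((K y z).flip u)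
    simp only [LinearMap.flip_apply] at htrace
    rw [htrace]
    linarith [hK2 y z u u]
  have hsecond : ∑ j, lorentzSign j * (g u y * K z (e j) (e j) u)
      = g u y * ricOf g e K u z := by
    rw [he.ricOf_eq_sum, Finset.mul_sum]
    refine Finset.sum_congr rfl fun j _ => ?_
    rw [hK3 z (e j) (e j) u]
    ring
  have hthird : ∑ j, lorentzSign j * (g u z * K (e j) y (e j) u)
      = - (g u z * ricOf g e K u y) := by
    rw [he.ricOf_comm hK1 hK2 hK3 u y, he.ricOf_eq_sum, Finset.mul_sum,
      ← Finset.sum_neg_distrib]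
    refine Finset.sum_congr rfl fun j _ => ?_
    rw [hK2 (e j) y (e j) u]
    ring
  simp only [mul_add, Finset.sum_add_distrib, hfirst, hsecond, hthird] at hcontract
  linarith

end LorentzBasis

lemma cyclic_weylOf_eq_of_ricOf_eq_smul {g : V →ₗ[ℝ] V →ₗ[ℝ] ℝ}
    (hg_symm : ∀ x y : V, g x y = g y x) (e : Module.Basis (Fin n) ℝ V)
    (K : V →ₗ[ℝ] V →ₗ[ℝ] V →ₗ[ℝ] V →ₗ[ℝ] ℝ) {u : V} {ξ : ℝ}
    (hξ : ∀ v : V, ricOf g e K v u = ξ * g u v) (x y z w : V) :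
    g u x * weylOf g e K y z w u + g u y * weylOf g e K z x w u
        + g u z * weylOf g e K x y w u
      = g u x * K y z w u + g u y * K z x w u + g u z * K x y w u := by
  simp only [weylOf, hξ, hg_symm x u, hg_symm y u, hg_symm z u]
  ring

theorem stmt2_general
    (g : V →ₗ[ℝ] V →ₗ[ℝ] ℝ)
    (hg_symm : ∀ x y : V, g x y = g y x)
    (e : Module.Basis (Fin n) ℝ V) (he : IsLorentzBasis g e)
    (u : V) (hu : g u u = -1)
    (K : V →ₗ[ℝ] V →ₗ[ℝ] V →ₗ[ℝ] V →ₗ[ℝ] ℝ)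
    (hK1 : ∀ x y z w : V, K x y z w = - K y x z w)
    (hK2 : ∀ x y z w : V, K x y z w = - K x y w z)
    (hK3 : ∀ x y z w : V, K x y z w = K z w x y)
    (hRcomp : ∀ x y z w : V,
        g u x * K y z w u + g u y * K z x w u + g u z * K x y w u = 0) :
    (∃ ξ : ℝ, ∀ y : V, ricOf g e K u y = ξ * g u y)
    ∧ (∀ x y z w : V,
        g u x * weylOf g e K y z w u + g u y * weylOf g e K z x w u
          + g u z * weylOf g e K x y w u = 0) := by
  have heigen : ∀ y : V, ricOf g e K u y = -ricOf g e K u u * g u y := by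
    intro y
    linear_combination he.mul_ricOf_comm_of_compatible hK1 hK2 hK3 hRcomp y u + ricOf g e K u y * hu
  refine ⟨⟨_, heigen⟩, fun x y z w => ?_⟩
  rw [cyclic_weylOf_eq_of_ricOf_eq_smul hg_symm e K
    (fun v => (he.ricOf_comm hK1 hK2 hK3 v u).trans (heigen v))]
  exact hRcomp x y z w

/-- Riemann-compatibility implies that `u` is a Ricci eigenvector and that `u` is
Weyl-compatible (eqs. (18)–(19) of the paper). -/
theorem stmt2 (hn : 3 ≤ n) [FiniteDimensional ℝ V] (hdim : Module.finrank ℝ V = n)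
    (g : V →ₗ[ℝ] V →ₗ[ℝ] ℝ)
    (hg_symm : ∀ x y : V, g x y = g y x)
    (hg_nondeg : ∀ x : V, (∀ y : V, g x y = 0) → x = 0)
    (e : Module.Basis (Fin n) ℝ V) (he : IsLorentzBasis g e)
    (u : V) (hu : g u u = -1)
    (K : V →ₗ[ℝ] V →ₗ[ℝ] V →ₗ[ℝ] V →ₗ[ℝ] ℝ)
    (hK1 : ∀ x y z w : V, K x y z w = - K y x z w)
    (hK2 : ∀ x y z w : V, K x y z w = - K x y w z)
    (hK3 : ∀ x y z w : V, K x y z w = K z w x y)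
    (hRcomp : ∀ x y z w : V,
        g u x * K y z w u + g u y * K z x w u + g u z * K x y w u = 0) :
    (∃ ξ : ℝ, ∀ y : V, ricOf g e K u y = ξ * g u y)
    ∧ (∀ x y z w : V,
        g u x * weylOf g e K y z w u + g u y * weylOf g e K z x w u
          + g u z * weylOf g e K x y w u = 0) :=
  stmt2_general g hg_symm e he u hu K hK1 hK2 hK3 hRcomp
end GRWAlg
end
end
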